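/- arXiv:2005.02713 — 2 statements merged into one kernel-verified Lean document; each statement's English description precedes it below -/
import Mathlib

section
/- For any magnetic field strength B > 1 (radius r = 1/B < 1), the inverse magnetic billiard in the unit square has a periodic orbit: the orbit starting at (s,θ) = (r, π/2) on the bottom side is periodic, i.e. it closes up after finitely many bounces, returning to the initial condition (r, π/2). -/
noncomputable section
open Complex Real Set

/-- The closed unit square in `ℝ² ≃ ℂ`. -/
def Sq : Set ℂ := {z | z.re ∈ Set.Icc (0:ℝ) 1 ∧ z.im ∈ Set.Icc (0:ℝ) 1}

/-- The boundary of the unit square. -/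
def Bd : Set ℂ := {z | z ∈ Sq ∧ (z.re = 0 ∨ z.re = 1 ∨ z.im = 0 ∨ z.im = 1)}

/-- The four corners of the unit square. -/
def Corners : Set ℂ := {0, 1, Complex.I, 1 + Complex.I}

/-- `a` and `b` lie on a common side of the unit square. -/
def SameSide (a b : ℂ) : Prop :=
  (a.re = 0 ∧ b.re = 0) ∨ (a.re = 1 ∧ b.re = 1) ∨
  (a.im = 0 ∧ b.im = 0) ∨ (a.im = 1 ∧ b.im = 1)

/-- One step of the inverse magnetic billiard with Larmor radius `r` in the unit
square: from the boundary state `x = (p, v)` (`p` on the boundary, `v` the unit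
velocity pointing into the square) the particle moves in a straight line to the
exit point `e` (the first boundary hit), then follows the counterclockwise circle
of radius `r` tangent to `v` at `e` (center `c = e + r·i·v`) until it first
re-enters the square at `y.1` with the tangent velocity `y.2 = i·(y.1 - c)/r`. -/
def StepVia (r : ℝ) (x : ℂ × ℂ) (e : ℂ) (y : ℂ × ℂ) : Prop :=
  ∃ t : ℝ, 0 < t ∧ e = x.1 + t * x.2 ∧ e ∈ Bd ∧
    (∀ s : ℝ, 0 < s → s < t → x.1 + s * x.2 ∈ interior Sq) ∧
    ∃ φ : ℝ, 0 < φ ∧ φ ≤ 2 * Real.pi ∧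
      y.1 = (e + r * Complex.I * x.2) + Complex.exp (Complex.I * φ) * (-(r * Complex.I * x.2)) ∧
      (∀ ψ : ℝ, 0 < ψ → ψ < φ →
        (e + r * Complex.I * x.2) + Complex.exp (Complex.I * ψ) * (-(r * Complex.I * x.2)) ∉ Sq) ∧
      y.1 ∈ Bd ∧
      y.2 = Complex.I * (y.1 - (e + r * Complex.I * x.2)) / r

/-- One magnetic bounce (exit and re-entry), exit point existentially quantified. -/
def Step (r : ℝ) (x y : ℂ × ℂ) : Prop := ∃ e : ℂ, StepVia r x e y

/-- One step of the classical billiard in the unit square: straight flight to the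
boundary followed by specular reflection. -/
def CStep (x y : ℂ × ℂ) : Prop :=
  ∃ t : ℝ, 0 < t ∧ y.1 = x.1 + t * x.2 ∧ y.1 ∈ Bd ∧
    (∀ s : ℝ, 0 < s → s < t → x.1 + s * x.2 ∈ interior Sq) ∧
    ((y.1.im = 0 ∨ y.1.im = 1) → y.2 = (starRingEnd ℂ) x.2) ∧
    ((y.1.re = 0 ∨ y.1.re = 1) → y.2 = -((starRingEnd ℂ) x.2))

lemma expIre (ψ : ℝ) : (Complex.exp (Complex.I * ψ)).re = Real.cos ψ := by
  rw [mul_comm, Complex.exp_mul_I]; simp [Complex.cos_ofReal_re]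
lemma expIim (ψ : ℝ) : (Complex.exp (Complex.I * ψ)).im = Real.sin ψ := by
  rw [mul_comm, Complex.exp_mul_I]; simp [Complex.sin_ofReal_re]
lemma cos32 : Real.cos (3*π/2) = 0 := by
  have h : (3:ℝ)*π/2 = π + π/2 := by ring
  rw [h, Real.cos_add]; simp
lemma sin32 : Real.sin (3*π/2) = -1 := by
  have h : (3:ℝ)*π/2 = π + π/2 := by ring
  rw [h, Real.sin_add]; simp
lemma exp32 : Complex.exp (Complex.I * ((3*π/2 : ℝ):ℂ)) = -Complex.I := by
  rw [mul_comm, Complex.exp_mul_I, ← Complex.ofReal_cos, ← Complex.ofReal_sin, cos32, sin32]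
  push_cast; ring
lemma cos_neg' {ψ : ℝ} (h1 : π ≤ ψ) (h2 : ψ < 3*π/2) : Real.cos ψ < 0 := by
  have := Real.pi_pos
  exact Real.cos_neg_of_pi_div_two_lt_of_lt (by linarith) (by linarith)

lemma step1 (r : ℝ) (hr0 : 0 < r) (hr1 : r < 1) (y : ℂ × ℂ)
    (h : Step r (((r:ℝ):ℂ), Complex.I) y) :
    y = ((((1-r:ℝ)):ℂ) * Complex.I, 1) := by
  have hpi := Real.pi_pos
  obtain ⟨e, t, ht0, het, heBd, -, φ, hφ0, hφ2, hy1, hnot, hyBd, hy2⟩ := h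
  dsimp only at het hy1 hnot hy2
  have hre : e.re = r := by rw [het]; simp
  have him : e.im = t := by rw [het]; simp
  have ht1 : t = 1 := by
    rcases heBd.2 with h|h|h|h
    · rw [hre] at h; linarith
    · rw [hre] at h; linarith
    · rw [him] at h; linarith
    · rw [him] at h; exact h
  subst ht1
  push_cast at het
  have hc : e + ↑r * Complex.I * Complex.I = Complex.I := by
    rw [het]; linear_combination (r:ℂ) * Complex.I_mul_I
  have hw : -(↑r * Complex.I * Complex.I) = (r:ℂ) := by
    linear_combination (-(r:ℝ):ℂ) * Complex.I_mul_I
  rw [hc] at hy1 hnot hy2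
  rw [hw] at hy1 hnot
  have key : ∀ ψ:ℝ, 0 < ψ → ψ < 3*π/2 →
      Complex.I + Complex.exp (Complex.I*ψ)*(r:ℂ) ∉ Sq := by
    intro ψ h0 h32 hmem
    simp only [Sq, Set.mem_setOf_eq, Set.mem_Icc] at hmem
    have hre' : (Complex.I + Complex.exp (Complex.I*ψ)*(r:ℂ)).re = r * Real.cos ψ := by
      simp [expIre, expIim]; ring
    have him' : (Complex.I + Complex.exp (Complex.I*ψ)*(r:ℂ)).im = 1 + r * Real.sin ψ := by
      simp [expIre, expIim]; ring
    rw [hre'] at hmem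
    rw [him'] at hmem
    rcases lt_or_ge ψ π with hlt | hge
    · have hs := Real.sin_pos_of_pos_of_lt_pi h0 hlt
      nlinarith [hmem.1.1, hmem.1.2, hmem.2.1, hmem.2.2]
    · have hcn := cos_neg' hge h32
      nlinarith [hmem.1.1, hmem.1.2, hmem.2.1, hmem.2.2]
  have hin32 : Complex.I + Complex.exp (Complex.I*((3*π/2:ℝ):ℂ))*(r:ℂ) ∈ Sq := by
    rw [exp32]
    simp only [Sq, Set.mem_setOf_eq, Set.mem_Icc]
    constructor
    · constructor <;> simp
    · constructor <;> simp <;> linarith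
  have hφ : φ = 3*π/2 := by
    rcases lt_trichotomy φ (3*π/2) with hl|heq|hg
    · exact absurd (hy1 ▸ hyBd.1) (key φ hφ0 hl)
    · exact heq
    · exact absurd hin32 (hnot (3*π/2) (by linarith) hg)
  subst hφ
  rw [exp32] at hy1
  have hy1' : y.1 = (((1-r:ℝ)):ℂ) * Complex.I := by
    rw [hy1]; push_cast; ring
  have hr' : (r:ℂ) ≠ 0 := by exact_mod_cast hr0.ne'
  have hy2' : y.2 = 1 := by
    have hnum : Complex.I * ((↑(1 - r):ℂ) * Complex.I - Complex.I) = (r:ℂ) := by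
      push_cast; linear_combination (-(r:ℂ)) * Complex.I_sq
    rw [hy2, hy1', hnum, div_self hr']
  exact Prod.ext hy1' hy2'

lemma step2 (r : ℝ) (hr0 : 0 < r) (hr1 : r < 1) (y : ℂ × ℂ)
    (h : Step r ((((1-r:ℝ)):ℂ) * Complex.I, 1) y) :
    y = ((((1-r:ℝ)):ℂ) + Complex.I, -Complex.I) := by
  have hpi := Real.pi_pos
  obtain ⟨e, t, ht0, het, heBd, -, φ, hφ0, hφ2, hy1, hnot, hyBd, hy2⟩ := h
  dsimp only at het hy1 hnot hy2
  have hre : e.re = t := by rw [het]; simp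
  have him : e.im = 1 - r := by rw [het]; simp
  have ht1 : t = 1 := by
    rcases heBd.2 with h|h|h|h
    · rw [hre] at h; linarith
    · rw [hre] at h; exact h
    · rw [him] at h; linarith
    · rw [him] at h; linarith
  subst ht1
  push_cast at het
  have hc : e + ↑r * Complex.I * 1 = 1 + Complex.I := by
    rw [het]; ring
  have hw : -(↑r * Complex.I * 1) = -((r:ℂ) * Complex.I) := by ring
  rw [hc] at hy1 hnot hy2
  rw [hw] at hy1 hnot
  have key : ∀ ψ:ℝ, 0 < ψ → ψ < 3*π/2 →
      1 + Complex.I + Complex.exp (Complex.I*ψ)*(-((r:ℂ)*Complex.I)) ∉ Sq := by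
    intro ψ h0 h32 hmem
    simp only [Sq, Set.mem_setOf_eq, Set.mem_Icc] at hmem
    have hre' : (1 + Complex.I + Complex.exp (Complex.I*ψ)*(-((r:ℂ)*Complex.I))).re
        = 1 + r * Real.sin ψ := by
      simp [expIre, expIim]; ring
    have him' : (1 + Complex.I + Complex.exp (Complex.I*ψ)*(-((r:ℂ)*Complex.I))).im
        = 1 - r * Real.cos ψ := by
      simp [expIre, expIim]; ring
    rw [hre'] at hmem
    rw [him'] at hmem
    rcases lt_or_ge ψ π with hlt | hge
    · have hs := Real.sin_pos_of_pos_of_lt_pi h0 hlt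
      nlinarith [hmem.1.1, hmem.1.2, hmem.2.1, hmem.2.2]
    · have hcn := cos_neg' hge h32
      nlinarith [hmem.1.1, hmem.1.2, hmem.2.1, hmem.2.2]
  have hval : 1 + Complex.I + (-Complex.I)*(-((r:ℂ)*Complex.I)) = (((1-r:ℝ)):ℂ) + Complex.I := by
    push_cast; linear_combination ((r:ℂ)) * Complex.I_mul_I
  have hin32 : 1 + Complex.I + Complex.exp (Complex.I*((3*π/2:ℝ):ℂ))*(-((r:ℂ)*Complex.I)) ∈ Sq := by
    rw [exp32, hval]
    simp only [Sq, Set.mem_setOf_eq, Set.mem_Icc]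
    constructor
    · constructor <;> simp <;> linarith
    · constructor <;> simp
  have hφ : φ = 3*π/2 := by
    rcases lt_trichotomy φ (3*π/2) with hl|heq|hg
    · exact absurd (hy1 ▸ hyBd.1) (key φ hφ0 hl)
    · exact heq
    · exact absurd hin32 (hnot (3*π/2) (by linarith) hg)
  subst hφ
  rw [exp32, hval] at hy1
  have hr' : (r:ℂ) ≠ 0 := by exact_mod_cast hr0.ne'
  have hy2' : y.2 = -Complex.I := by
    have hnum : Complex.I * (((↑(1 - r):ℂ) + Complex.I) - (1 + Complex.I))
        = -(r:ℂ) * Complex.I := by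
      push_cast; ring
    rw [hy2, hy1, hnum, neg_mul, neg_div, mul_comm, mul_div_assoc, div_self hr', mul_one]
  exact Prod.ext hy1 hy2'

lemma step3 (r : ℝ) (hr0 : 0 < r) (hr1 : r < 1) (y : ℂ × ℂ)
    (h : Step r ((((1-r:ℝ)):ℂ) + Complex.I, -Complex.I) y) :
    y = (1 + ((r:ℝ):ℂ) * Complex.I, -1) := by
  have hpi := Real.pi_pos
  obtain ⟨e, t, ht0, het, heBd, -, φ, hφ0, hφ2, hy1, hnot, hyBd, hy2⟩ := h
  dsimp only at het hy1 hnot hy2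
  have hre : e.re = 1 - r := by rw [het]; simp
  have him : e.im = 1 - t := by rw [het]; simp; ring
  have ht1 : t = 1 := by
    rcases heBd.2 with h|h|h|h
    · rw [hre] at h; linarith
    · rw [hre] at h; linarith
    · rw [him] at h; linarith
    · rw [him] at h; linarith
  subst ht1
  push_cast at het
  have hc : e + ↑r * Complex.I * (-Complex.I) = 1 := by
    rw [het]; linear_combination (-(r:ℂ)) * Complex.I_mul_I
  have hw : -(↑r * Complex.I * (-Complex.I)) = -(r:ℂ) := by
    linear_combination (r:ℂ) * Complex.I_mul_I
  rw [hc] at hy1 hnot hy2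
  rw [hw] at hy1 hnot
  have key : ∀ ψ:ℝ, 0 < ψ → ψ < 3*π/2 →
      1 + Complex.exp (Complex.I*ψ)*(-(r:ℂ)) ∉ Sq := by
    intro ψ h0 h32 hmem
    simp only [Sq, Set.mem_setOf_eq, Set.mem_Icc] at hmem
    have hre' : (1 + Complex.exp (Complex.I*ψ)*(-(r:ℂ))).re = 1 - r * Real.cos ψ := by
      simp [expIre, expIim]; ring
    have him' : (1 + Complex.exp (Complex.I*ψ)*(-(r:ℂ))).im = -(r * Real.sin ψ) := by
      simp [expIre, expIim]; ring
    rw [hre'] at hmem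
    rw [him'] at hmem
    rcases lt_or_ge ψ π with hlt | hge
    · have hs := Real.sin_pos_of_pos_of_lt_pi h0 hlt
      nlinarith [hmem.1.1, hmem.1.2, hmem.2.1, hmem.2.2]
    · have hcn := cos_neg' hge h32
      nlinarith [hmem.1.1, hmem.1.2, hmem.2.1, hmem.2.2]
  have hval : 1 + (-Complex.I)*(-(r:ℂ)) = 1 + ((r:ℝ):ℂ) * Complex.I := by ring
  have hin32 : 1 + Complex.exp (Complex.I*((3*π/2:ℝ):ℂ))*(-(r:ℂ)) ∈ Sq := by
    rw [exp32, hval]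
    simp only [Sq, Set.mem_setOf_eq, Set.mem_Icc]
    constructor
    · constructor <;> simp
    · constructor <;> simp <;> linarith
  have hφ : φ = 3*π/2 := by
    rcases lt_trichotomy φ (3*π/2) with hl|heq|hg
    · exact absurd (hy1 ▸ hyBd.1) (key φ hφ0 hl)
    · exact heq
    · exact absurd hin32 (hnot (3*π/2) (by linarith) hg)
  subst hφ
  rw [exp32, hval] at hy1
  have hr' : (r:ℂ) ≠ 0 := by exact_mod_cast hr0.ne'
  have hy2' : y.2 = -1 := by
    have hnum : Complex.I * ((1 + ((r:ℝ):ℂ) * Complex.I) - 1) = -(r:ℂ) := by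
      linear_combination (r:ℂ) * Complex.I_mul_I
    rw [hy2, hy1, hnum, neg_div, div_self hr']
  exact Prod.ext hy1 hy2'

lemma step4 (r : ℝ) (hr0 : 0 < r) (hr1 : r < 1) (y : ℂ × ℂ)
    (h : Step r (1 + ((r:ℝ):ℂ) * Complex.I, -1) y) :
    y = (((r:ℝ):ℂ), Complex.I) := by
  have hpi := Real.pi_pos
  obtain ⟨e, t, ht0, het, heBd, -, φ, hφ0, hφ2, hy1, hnot, hyBd, hy2⟩ := h
  dsimp only at het hy1 hnot hy2
  have hre : e.re = 1 - t := by rw [het]; simp; ring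
  have him : e.im = r := by rw [het]; simp
  have ht1 : t = 1 := by
    rcases heBd.2 with h|h|h|h
    · rw [hre] at h; linarith
    · rw [hre] at h; linarith
    · rw [him] at h; linarith
    · rw [him] at h; linarith
  subst ht1
  push_cast at het
  have hc : e + ↑r * Complex.I * (-1) = 0 := by
    rw [het]; ring
  have hw : -(↑r * Complex.I * (-1)) = (r:ℂ) * Complex.I := by ring
  rw [hc] at hy1 hnot hy2
  rw [hw] at hy1 hnot
  have key : ∀ ψ:ℝ, 0 < ψ → ψ < 3*π/2 →
      0 + Complex.exp (Complex.I*ψ)*((r:ℂ)*Complex.I) ∉ Sq := by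
    intro ψ h0 h32 hmem
    simp only [Sq, Set.mem_setOf_eq, Set.mem_Icc] at hmem
    have hre' : (0 + Complex.exp (Complex.I*ψ)*((r:ℂ)*Complex.I)).re = -(r * Real.sin ψ) := by
      simp [expIre, expIim]; ring
    have him' : (0 + Complex.exp (Complex.I*ψ)*((r:ℂ)*Complex.I)).im = r * Real.cos ψ := by
      simp [expIre, expIim]; ring
    rw [hre'] at hmem
    rw [him'] at hmem
    rcases lt_or_ge ψ π with hlt | hge
    · have hs := Real.sin_pos_of_pos_of_lt_pi h0 hlt
      nlinarith [hmem.1.1, hmem.1.2, hmem.2.1, hmem.2.2]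
    · have hcn := cos_neg' hge h32
      nlinarith [hmem.1.1, hmem.1.2, hmem.2.1, hmem.2.2]
  have hval : 0 + (-Complex.I)*((r:ℂ)*Complex.I) = ((r:ℝ):ℂ) := by
    linear_combination (-(r:ℂ)) * Complex.I_mul_I
  have hin32 : 0 + Complex.exp (Complex.I*((3*π/2:ℝ):ℂ))*((r:ℂ)*Complex.I) ∈ Sq := by
    rw [exp32, hval]
    simp only [Sq, Set.mem_setOf_eq, Set.mem_Icc]
    constructor
    · constructor <;> simp <;> linarith
    · constructor <;> simp
  have hφ : φ = 3*π/2 := by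
    rcases lt_trichotomy φ (3*π/2) with hl|heq|hg
    · exact absurd (hy1 ▸ hyBd.1) (key φ hφ0 hl)
    · exact heq
    · exact absurd hin32 (hnot (3*π/2) (by linarith) hg)
  subst hφ
  rw [exp32, hval] at hy1
  have hr' : (r:ℂ) ≠ 0 := by exact_mod_cast hr0.ne'
  have hy2' : y.2 = Complex.I := by
    rw [hy2, hy1, sub_zero, mul_div_assoc, div_self hr', mul_one]
  exact Prod.ext hy1 hy2'


/-- For any magnetic field strength `B > 1` (radius `r = 1/B < 1`), the inverse
magnetic billiard in the unit square has a periodic orbit: any orbit starting at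
Birkhoff coordinates `(s, θ) = (r, π/2)` on the bottom side — i.e. at the point
`r` of the bottom side with vertical velocity `i` — closes up after finitely
many bounces, returning to its initial condition. -/
theorem periodic_orbit_of_B_gt_one
    (B : ℝ) (hB : 1 < B)
    (x : ℕ → ℂ × ℂ)
    (hx0 : x 0 = (((1 / B : ℝ) : ℂ), Complex.I))
    (hstep : ∀ n, Step (1 / B) (x n) (x (n + 1))) :
    ∃ k : ℕ, 0 < k ∧ x k = x 0 := by
  refine ⟨4, by norm_num, ?_⟩
  have hB0 : (0:ℝ) < B := lt_trans one_pos hB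
  have hr0 : 0 < 1/B := by positivity
  have hr1 : 1/B < 1 := by rw [div_lt_one hB0]; exact hB
  have s0 := hstep 0; rw [hx0] at s0
  have h1 := step1 (1/B) hr0 hr1 (x 1) s0
  have s1 := hstep 1; rw [h1] at s1
  have h2 := step2 (1/B) hr0 hr1 (x 2) s1
  have s2 := hstep 2; rw [h2] at s2
  have h3 := step3 (1/B) hr0 hr1 (x 3) s2
  have s3 := hstep 3; rw [h3] at s3
  have h4 := step4 (1/B) hr0 hr1 (x 4) s3
  rw [h4, hx0]
end
end

section
/- Vertical period-2 orbit: for r ∈ (0, 1/2), consider the inverse magnetic billiard orbit starting on the bottom side of the unit square at (s₀, θ₀) = (s, π/2) with r < s < 1 - r. It travels vertically to the top side at x = s and exits with velocity (0,1). The counterclockwise circle of radius r has center (s,1) + r·J((0,1)) = (s - r, 1), so the orbit re-enters at (s - 2r, 1) with velocity (0,-1). It then travels down to the bottom side at x = s - 2r and exits with velocity (0,-1). The circle has center (s - 2r + r, 0) = (s - r, 0), so the orbit re-enters at (s, 0) with velocity (0,1). Hence, provided s - 2r > 0, the orbit is periodic with period 2 in the return map F. -/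
noncomputable section
open Complex Real Set

lemma exp_I_mul_re (c : ℂ) (ρ ψ : ℝ) :
    (c + Complex.exp (Complex.I * ψ) * (ρ:ℂ)).re = c.re + ρ * Real.cos ψ ∧
    (c + Complex.exp (Complex.I * ψ) * (ρ:ℂ)).im = c.im + ρ * Real.sin ψ := by
  rw [mul_comm Complex.I (ψ:ℂ), Complex.exp_mul_I]
  constructor <;>
  · simp [Complex.add_re, Complex.add_im, Complex.mul_re, Complex.mul_im,
      Complex.cos_ofReal_re, Complex.sin_ofReal_re]
    ring

lemma step_up (r a : ℝ) (hr : 0 < r) (ha2 : 0 < a - 2*r) (ha1 : a < 1)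
    (e : ℂ) (y : ℂ × ℂ) (h : StepVia r ((a:ℂ), Complex.I) e y) :
    y = (((a - 2*r : ℝ):ℂ) + Complex.I, -Complex.I) := by
  obtain ⟨t, ht, he, heBd, -, φ, hφ0, hφ2, hy1, harc, hyBd, hy2⟩ := h
  simp only at he hy1 harc hy2
  have hre : e.re = a := by rw [he]; simp
  have him : e.im = t := by rw [he]; simp
  have ht1 : t = 1 := by
    rcases heBd.2 with h' | h' | h' | h'
    · rw [hre] at h'; linarith
    · rw [hre] at h'; linarith
    · rw [him] at h'; linarith
    · rw [him] at h'; linarith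
  have het : e = (a:ℂ) + Complex.I := by rw [he, ht1]; simp
  have hrI : (r:ℂ) * Complex.I * Complex.I = -(r:ℂ) := by
    rw [mul_assoc, Complex.I_mul_I]; ring
  have hcen : e + (r:ℂ) * Complex.I * Complex.I = ((a - r : ℝ):ℂ) + Complex.I := by
    rw [het, hrI]; push_cast; ring
  have hneg : -((r:ℂ) * Complex.I * Complex.I) = ((r:ℝ):ℂ) := by rw [hrI]; ring
  rw [hcen] at hy1 harc hy2
  rw [hneg] at hy1 harc
  have hcre : (((a - r : ℝ):ℂ) + Complex.I).re = a - r := by simp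
  have hcim : (((a - r : ℝ):ℂ) + Complex.I).im = 1 := by simp
  -- φ = π
  have hφπ : φ = Real.pi := by
    rcases lt_trichotomy φ Real.pi with h' | h' | h'
    · exfalso
      have hsin : 0 < Real.sin φ := Real.sin_pos_of_pos_of_lt_pi hφ0 h'
      have him1 : y.1.im = 1 + r * Real.sin φ := by
        rw [hy1, (exp_I_mul_re _ r φ).2, hcim]
      have : y.1.im ≤ 1 := hyBd.1.2.2
      nlinarith
    · exact h'
    · exfalso
      refine harc Real.pi Real.pi_pos h' ?_
      have h1 := (exp_I_mul_re (((a - r : ℝ):ℂ) + Complex.I) r Real.pi).1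
      have h2 := (exp_I_mul_re (((a - r : ℝ):ℂ) + Complex.I) r Real.pi).2
      simp only [Sq, Set.mem_setOf_eq, Set.mem_Icc]
      rw [h1, h2, hcre, hcim, Real.cos_pi, Real.sin_pi]
      constructor <;> constructor <;> nlinarith
  have hexp : Complex.exp (Complex.I * (φ:ℂ)) = -1 := by
    rw [hφπ, mul_comm]; exact_mod_cast Complex.exp_pi_mul_I
  have hy1' : y.1 = ((a - 2*r : ℝ):ℂ) + Complex.I := by
    rw [hy1, hexp]; push_cast; ring
  have hy2' : y.2 = -Complex.I := by
    rw [hy2, hy1']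
    have : ((a - 2*r : ℝ):ℂ) + Complex.I - (((a - r : ℝ):ℂ) + Complex.I) = -(r:ℂ) := by
      push_cast; ring
    rw [this]
    have hr0 : (r:ℂ) ≠ 0 := Complex.ofReal_ne_zero.mpr hr.ne'
    field_simp
  exact Prod.ext hy1' hy2'

lemma step_down (r a : ℝ) (hr : 0 < r) (ha0 : 0 < a) (ha1 : a + 2*r < 1)
    (e : ℂ) (y : ℂ × ℂ) (h : StepVia r ((a:ℂ) + Complex.I, -Complex.I) e y) :
    y = (((a + 2*r : ℝ):ℂ), Complex.I) := by
  obtain ⟨t, ht, he, heBd, -, φ, hφ0, hφ2, hy1, harc, hyBd, hy2⟩ := h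
  simp only at he hy1 harc hy2
  have hre : e.re = a := by rw [he]; simp
  have him : e.im = 1 - t := by rw [he]; simp; ring
  have ht1 : t = 1 := by
    rcases heBd.2 with h' | h' | h' | h'
    · rw [hre] at h'; linarith
    · rw [hre] at h'; linarith
    · rw [him] at h'; linarith
    · rw [him] at h'; linarith
  have het : e = (a:ℂ) := by rw [he, ht1]; push_cast; ring
  have hrI : (r:ℂ) * Complex.I * -Complex.I = (r:ℂ) := by
    rw [mul_assoc, mul_neg, Complex.I_mul_I]; ring
  have hcen : e + (r:ℂ) * Complex.I * -Complex.I = ((a + r : ℝ):ℂ) := by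
    rw [het, hrI]; push_cast; ring
  have hneg : -((r:ℂ) * Complex.I * -Complex.I) = ((-r:ℝ):ℂ) := by rw [hrI]; push_cast; ring
  rw [hcen] at hy1 harc hy2
  rw [hneg] at hy1 harc
  have hcre : (((a + r : ℝ):ℂ)).re = a + r := by simp
  have hcim : (((a + r : ℝ):ℂ)).im = 0 := by simp
  have hφπ : φ = Real.pi := by
    rcases lt_trichotomy φ Real.pi with h' | h' | h'
    · exfalso
      have hsin : 0 < Real.sin φ := Real.sin_pos_of_pos_of_lt_pi hφ0 h'
      have him1 : y.1.im = 0 + (-r) * Real.sin φ := by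
        rw [hy1, (exp_I_mul_re _ (-r) φ).2, hcim]
      have : 0 ≤ y.1.im := hyBd.1.2.1
      nlinarith
    · exact h'
    · exfalso
      refine harc Real.pi Real.pi_pos h' ?_
      have h1 := (exp_I_mul_re (((a + r : ℝ):ℂ)) (-r) Real.pi).1
      have h2 := (exp_I_mul_re (((a + r : ℝ):ℂ)) (-r) Real.pi).2
      simp only [Sq, Set.mem_setOf_eq, Set.mem_Icc]
      rw [h1, h2, hcre, hcim, Real.cos_pi, Real.sin_pi]
      constructor <;> constructor <;> nlinarith
  have hexp : Complex.exp (Complex.I * (φ:ℂ)) = -1 := by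
    rw [hφπ, mul_comm]; exact_mod_cast Complex.exp_pi_mul_I
  have hy1' : y.1 = ((a + 2*r : ℝ):ℂ) := by
    rw [hy1, hexp]; push_cast; ring
  have hy2' : y.2 = Complex.I := by
    rw [hy2, hy1']
    have : ((a + 2*r : ℝ):ℂ) - ((a + r : ℝ):ℂ) = (r:ℂ) := by push_cast; ring
    rw [this]
    have hr0 : (r:ℂ) ≠ 0 := Complex.ofReal_ne_zero.mpr hr.ne'
    field_simp
  exact Prod.ext hy1' hy2'

/-- Vertical period-2 orbit: for `r ∈ (0, 1/2)` and `r < s < 1 - r` with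
`s - 2r > 0`, the inverse magnetic billiard orbit starting on the bottom side at
`(s, 0)` with vertical velocity `i` hits the top side at `x = s`, exits, and the
counterclockwise semicircle of radius `r` (center `(s - r, 1)`) returns it to
the top side at `(s - 2r, 1)` with velocity `-i`; it then travels down to the
bottom side at `x = s - 2r`, exits, and the semicircle with center `(s - r, 0)`
re-enters at `(s, 0)` with velocity `i`. Hence the orbit is periodic with period
2 for the return map. -/
theorem vertical_period_two_orbit
    (r s : ℝ) (hr : r ∈ Set.Ioo (0:ℝ) (1/2))
    (hs : s ∈ Set.Ioo r (1 - r)) (hs2r : 0 < s - 2 * r)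
    (x : ℕ → ℂ × ℂ)
    (hx0 : x 0 = ((s : ℂ), Complex.I))
    (hstep : ∀ n, Step r (x n) (x (n + 1))) :
    x 1 = (((s - 2 * r : ℝ) : ℂ) + Complex.I, -Complex.I) ∧ x 2 = x 0 := by
  obtain ⟨hr0, hr2⟩ := hr
  obtain ⟨hs1, hs2⟩ := hs
  obtain ⟨e0, h0⟩ := hstep 0
  rw [hx0] at h0
  have hx1 : x 1 = (((s - 2 * r : ℝ):ℂ) + Complex.I, -Complex.I) :=
    step_up r s hr0 hs2r (by linarith) e0 (x 1) h0
  refine ⟨hx1, ?_⟩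
  obtain ⟨e1, h1⟩ := hstep 1
  rw [hx1] at h1
  have hx2 : x 2 = (((s - 2 * r + 2 * r : ℝ):ℂ), Complex.I) :=
    step_down r (s - 2*r) hr0 hs2r (by linarith) e1 (x 2) h1
  rw [hx2, hx0]
  norm_num
end
end
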